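/- arXiv:1302.3741 — 3 statements merged into one kernel-verified Lean document; each statement's English description precedes it below -/
import Mathlib

section
/- Let x = P(x) be an MPS in n variables with least fixed point q* > 0. Then P^n(0) > 0, i.e., after n iterations of value iteration starting from the zero vector, every coordinate is strictly positive. -/
/-!
The iterates `x k = P^k(0)` increase to the least fixed point `q* > 0`, so every coordinate
becomes positive eventually. A polynomial with nonnegative coefficients is positive at a
nonnegative point exactly when one of its monomials has all its variables positive there, so the
set of positive coordinates of `x (k + 1)` is determined by that of `x k`. These sets therefore
form an increasing chain in which a repetition is permanent; in `Fin n` such a chain reaches its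
final value, which is all of `Fin n`, within `n` steps.
-/

open Matrix MvPolynomial

/-- Evaluation of a vector of multivariate polynomials. -/
noncomputable def evalVec {n : ℕ} (P : Fin n → MvPolynomial (Fin n) ℝ) (x : Fin n → ℝ) :
    Fin n → ℝ := fun i => MvPolynomial.eval x (P i)

open Filter Topology

namespace MvPolynomial

variable {σ R : Type*} [CommSemiring R] [LinearOrder R] [IsStrictOrderedRing R]
  {p : MvPolynomial σ R} {a b : σ → R}

theorem eval_nonneg_of_coeff_nonneg (hp : ∀ m, 0 ≤ p.coeff m) (ha : 0 ≤ a) :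
    0 ≤ eval a p := by
  rw [eval_eq]
  exact Finset.sum_nonneg fun m _ =>
    mul_nonneg (hp m) (Finset.prod_nonneg fun j _ => pow_nonneg (ha j) _)

theorem eval_le_eval_of_coeff_nonneg (hp : ∀ m, 0 ≤ p.coeff m) (ha : 0 ≤ a) (hab : a ≤ b) :
    eval a p ≤ eval b p := by
  rw [eval_eq, eval_eq]
  refine Finset.sum_le_sum fun m _ => mul_le_mul_of_nonneg_left ?_ (hp m)
  exact Finset.prod_le_prod (fun j _ => pow_nonneg (ha j) _)
    (fun j _ => pow_le_pow_left₀ (ha j) (hab j) _)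

theorem eval_pos_iff_of_coeff_nonneg (hp : ∀ m, 0 ≤ p.coeff m) (ha : 0 ≤ a) :
    0 < eval a p ↔ ∃ m ∈ p.support, ∀ j ∈ m.support, 0 < a j := by
  rw [eval_eq, Finset.sum_pos_iff_of_nonneg fun m _ =>
    mul_nonneg (hp m) (Finset.prod_nonneg fun j _ => pow_nonneg (ha j) _)]
  refine exists_congr fun m => and_congr_right fun hm => ?_
  have hcoeff : 0 < p.coeff m := (hp m).lt_of_ne' (mem_support_iff.1 hm)
  rw [mul_pos_iff_of_pos_left hcoeff]
  constructor
  · intro hprod j hj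
    refine (ha j).lt_of_ne fun h0 => hprod.ne' (Finset.prod_eq_zero hj ?_)
    rw [← h0]
    exact zero_pow (Finsupp.mem_support_iff.1 hj)
  · exact fun h => Finset.prod_pos fun j hj => pow_pos (h j hj) _

end MvPolynomial

theorem Finset.subset_apply_card_of_monotone {α : Type*} [Fintype α] {s : ℕ → Finset α}
    (hmono : Monotone s) (hstep : ∀ k l, s k = s l → s (k + 1) = s (l + 1)) (m : ℕ) :
    s m ⊆ s (Fintype.card α) := by
  have stable : ∀ k, s (k + 1) = s k → ∀ m, s m ⊆ s k := by
    intro k hk m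
    rcases le_total m k with hmk | hkm
    · exact hmono hmk
    · exact (Nat.le_induction (P := fun m _ => s m = s k) rfl
        (fun m _ ih => (hstep m k ih).trans hk) m hkm).le
  have growth : ∀ k, k ≤ (s k).card ∨ ∀ m, s m ⊆ s k := by
    intro k
    induction k with
    | zero => exact Or.inl (Nat.zero_le _)
    | succ k ih =>
      rcases ih with hcard | hall
      · by_cases hk : s (k + 1) = s k
        · exact Or.inr (by rw [hk]; exact stable k hk)
        · exact Or.inl (hcard.trans_lt (Finset.card_lt_card
            ((hmono k.le_succ).ssubset_of_ne (Ne.symm hk))))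
      · exact Or.inr fun m => (hall m).trans (hmono k.le_succ)
  rcases growth (Fintype.card α) with hcard | hall
  · rw [Finset.eq_univ_of_card _ (le_antisymm (Finset.card_le_univ _) hcard)]
    exact Finset.subset_univ _
  · exact hall m

noncomputable def posSupport {ι : Type*} [Fintype ι] (x : ι → ℝ) : Finset ι :=
  {i | 0 < x i}

section posSupport

variable {ι : Type*} [Fintype ι] {x y : ι → ℝ}

theorem mem_posSupport {i : ι} : i ∈ posSupport x ↔ 0 < x i := by
  simp [posSupport]

theorem posSupport_mono (h : x ≤ y) : posSupport x ⊆ posSupport y := fun i hi =>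
  mem_posSupport.2 ((mem_posSupport.1 hi).trans_le (h i))

end posSupport

section evalVec

variable {n : ℕ} {P : Fin n → MvPolynomial (Fin n) ℝ} {x y q : Fin n → ℝ}

theorem continuous_evalVec (P : Fin n → MvPolynomial (Fin n) ℝ) : Continuous (evalVec P) :=
  continuous_pi fun i => continuous_eval (P i)

theorem evalVec_nonneg (hP : ∀ i m, 0 ≤ (P i).coeff m) (hx : 0 ≤ x) : 0 ≤ evalVec P x :=
  fun i => eval_nonneg_of_coeff_nonneg (hP i) hx

theorem evalVec_mono (hP : ∀ i m, 0 ≤ (P i).coeff m) (hx : 0 ≤ x) (hxy : x ≤ y) :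
    evalVec P x ≤ evalVec P y :=
  fun i => eval_le_eval_of_coeff_nonneg (hP i) hx hxy

theorem posSupport_evalVec_congr (hP : ∀ i m, 0 ≤ (P i).coeff m) (hx : 0 ≤ x) (hy : 0 ≤ y)
    (h : posSupport x = posSupport y) : posSupport (evalVec P x) = posSupport (evalVec P y) := by
  have hpos : ∀ j, 0 < x j ↔ 0 < y j := fun j => by rw [← mem_posSupport, h, mem_posSupport]
  ext i
  simp only [mem_posSupport, evalVec, eval_pos_iff_of_coeff_nonneg (hP i) hx,
    eval_pos_iff_of_coeff_nonneg (hP i) hy, hpos]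

theorem iterate_evalVec_nonneg (hP : ∀ i m, 0 ≤ (P i).coeff m) (k : ℕ) :
    0 ≤ (evalVec P)^[k] 0 := by
  induction k with
  | zero => exact le_rfl
  | succ k ih => rw [Function.iterate_succ_apply']; exact evalVec_nonneg hP ih

theorem monotone_iterate_evalVec (hP : ∀ i m, 0 ≤ (P i).coeff m) :
    Monotone fun k => (evalVec P)^[k] 0 := by
  refine monotone_nat_of_le_succ fun k => ?_
  induction k with
  | zero => exact iterate_evalVec_nonneg hP 1
  | succ k ih =>
    rw [Function.iterate_succ_apply', Function.iterate_succ_apply' _ (k + 1)]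
    exact evalVec_mono hP (iterate_evalVec_nonneg hP k) ih

theorem iterate_evalVec_le (hP : ∀ i m, 0 ≤ (P i).coeff m) (hq : 0 ≤ q)
    (hfix : evalVec P q ≤ q) (k : ℕ) : (evalVec P)^[k] 0 ≤ q := by
  induction k with
  | zero => exact hq
  | succ k ih =>
    rw [Function.iterate_succ_apply']
    exact (evalVec_mono hP (iterate_evalVec_nonneg hP k) ih).trans hfix

theorem tendsto_iterate_evalVec_zero (hP : ∀ i m, 0 ≤ (P i).coeff m) (hq : 0 ≤ q)
    (hfix : evalVec P q = q) (hleast : ∀ r : Fin n → ℝ, 0 ≤ r → evalVec P r = r → q ≤ r) :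
    Tendsto (fun k => (evalVec P)^[k] 0) atTop (𝓝 q) := by
  have hbdd : BddAbove (Set.range fun k => (evalVec P)^[k] 0) :=
    ⟨q, Set.forall_mem_range.2 (iterate_evalVec_le hP hq hfix.le)⟩
  have hlim := tendsto_atTop_ciSup (monotone_iterate_evalVec hP) hbdd
  set r := ⨆ k, (evalVec P)^[k] 0
  have hr_fix : evalVec P r = r := by
    refine tendsto_nhds_unique (((continuous_evalVec P).tendsto r).comp hlim) ?_
    simpa only [Function.comp_def, ← Function.iterate_succ_apply' (evalVec P)] using
      (tendsto_add_atTop_iff_nat 1).2 hlim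
  have hr_nonneg : 0 ≤ r := ge_of_tendsto' hlim (iterate_evalVec_nonneg hP)
  have hrq : r = q := le_antisymm (ciSup_le (iterate_evalVec_le hP hq hfix.le))
    (hleast r hr_nonneg hr_fix)
  rwa [← hrq]

end evalVec

theorem stmt8 {n : ℕ} (P : Fin n → MvPolynomial (Fin n) ℝ)
    (hpos : ∀ i m, 0 ≤ (P i).coeff m)
    (q : Fin n → ℝ) (hq : ∀ i, 0 < q i) (hfix : evalVec P q = q)
    (hleast : ∀ r : Fin n → ℝ, 0 ≤ r → evalVec P r = r → q ≤ r) :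
    ∀ i, 0 < (evalVec P)^[n] 0 i := by
  intro i
  have hlim := tendsto_iterate_evalVec_zero hpos (fun j => (hq j).le) hfix hleast
  obtain ⟨k, hk⟩ := ((tendsto_pi_nhds.1 hlim i).eventually (lt_mem_nhds (hq i))).exists
  have hstep : ∀ k l, posSupport ((evalVec P)^[k] 0) = posSupport ((evalVec P)^[l] 0) →
      posSupport ((evalVec P)^[k + 1] 0) = posSupport ((evalVec P)^[l + 1] 0) := by
    intro k l h
    simp only [Function.iterate_succ_apply']
    exact posSupport_evalVec_congr hpos (iterate_evalVec_nonneg hpos k)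
      (iterate_evalVec_nonneg hpos l) h
  have hsupp := Finset.subset_apply_card_of_monotone
    (fun k l hkl => posSupport_mono (monotone_iterate_evalVec hpos hkl)) hstep k
  rw [Fintype.card_fin] at hsupp
  exact mem_posSupport.1 (hsupp (mem_posSupport.2 hk))
end

section
/- Let x = P(x) be an MPS such that P is affine, i.e., P(x) = Bx + c with B a nonnegative n×n matrix and c a nonnegative vector, strongly connected, with least fixed point q* > 0. Then ρ(B) < 1, I − B is nonsingular, and q* = (I − B)^{−1} c is the unique solution of x = Bx + c. -/
/-!
Unrolling `q = B q + c` gives `q = B^K q + ∑_{k<K} B^k c`. Since `q > 0` is least, `c ≠ 0`, and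
irreducibility carries a positive entry of `c` to every coordinate of some `B^k c`; so for `K`
large the sum is positive and `B^K q < q` coordinatewise. A nonnegative matrix with such a
strictly subinvariant positive vector admits no nonzero `w ≥ 0` with `w ≤ B^K w`. If `B v = z v`
with `v ≠ 0` and `|z| ≥ 1`, then `w = |v|` is such a vector, so every eigenvalue of `B` (real or
complex) has modulus `< 1`. Hence `ρ(B) < 1`, `1 - B` is invertible, and every fixed point equals
`(1 - B)⁻¹ c`.
-/

open Matrix

/-- A nonnegative square matrix is irreducible if its support digraph is strongly connected. -/
def MatIrreducible {n : ℕ} (A : Matrix (Fin n) (Fin n) ℝ) : Prop :=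
  ∀ i j : Fin n, Relation.ReflTransGen (fun a b => 0 < A a b) i j

/-- The spectral radius of a real matrix, via its complexification. -/
noncomputable def specRad {n : ℕ} (A : Matrix (Fin n) (Fin n) ℝ) : ENNReal :=
  spectralRadius ℂ (A.map (algebraMap ℝ ℂ))

open scoped NNReal

theorem spectrum.spectralRadius_lt_of_forall_lt_of_finite {𝕜 A : Type*} [NormedField 𝕜] [Ring A]
    [Algebra 𝕜 A] {a : A} (hfin : (spectrum 𝕜 a).Finite) {r : ℝ≥0} (hr : 0 < r)
    (h : ∀ k ∈ spectrum 𝕜 a, ‖k‖₊ < r) : spectralRadius 𝕜 a < r := by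
  rw [spectralRadius, ← hfin.coe_toFinset]
  simp only [Finset.mem_coe, ← Finset.sup_eq_iSup]
  rw [Finset.sup_lt_iff (by simpa using hr)]
  exact fun k hk => by exact_mod_cast h k (hfin.mem_toFinset.1 hk)

namespace Matrix

variable {ι : Type*} [Fintype ι]

section Semiring

variable [DecidableEq ι] {R : Type*} [Semiring R]

theorem eq_pow_mulVec_add_sum_of_mulVec_add_eq {A : Matrix ι ι R} {c q : ι → R}
    (hfix : A *ᵥ q + c = q) (k : ℕ) :
    q = A ^ k *ᵥ q + ∑ j ∈ Finset.range k, A ^ j *ᵥ c := by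
  induction k with
  | zero => simp
  | succ k ih =>
    have hstep : A ^ (k + 1) *ᵥ q + A ^ k *ᵥ c = A ^ k *ᵥ q := by
      rw [pow_succ, ← mulVec_mulVec, ← mulVec_add, hfix]
    rw [Finset.sum_range_succ, ← add_assoc, add_right_comm, hstep, ← ih]

end Semiring

theorem eq_inv_one_sub_mulVec_of_mulVec_add_eq [DecidableEq ι] {R : Type*} [CommRing R]
    {A : Matrix ι ι R} (hA : IsUnit (1 - A).det) {c x : ι → R} (hx : A *ᵥ x + c = x) :
    x = (1 - A)⁻¹ *ᵥ c := by
  have hc : (1 - A) *ᵥ x = c := by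
    rw [sub_mulVec, one_mulVec, sub_eq_iff_eq_add', hx]
  rw [← hc, mulVec_mulVec, nonsing_inv_mul _ hA, one_mulVec]

section OrderedField

variable {R : Type*} [Field R] [LinearOrder R] [IsStrictOrderedRing R] {A : Matrix ι ι R}

theorem eq_zero_of_le_mulVec_of_mulVec_lt (hA : ∀ i j, 0 ≤ A i j) {q : ι → R}
    (hq : ∀ i, 0 < q i) (hAq : ∀ i, (A *ᵥ q) i < q i) {w : ι → R} (hw : 0 ≤ w)
    (hwA : w ≤ A *ᵥ w) : w = 0 := by
  by_contra hne
  obtain ⟨i, hi⟩ : ∃ i, 0 < w i := by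
    by_contra! h
    exact hne (le_antisymm h hw)
  obtain ⟨i₀, -, hmax⟩ := Finset.exists_max_image Finset.univ (fun i => w i / q i)
    ⟨i, Finset.mem_univ i⟩
  -- `t • q` is the smallest multiple of `q` above `w`, and it touches `w` at `i₀`.
  set t := w i₀ / q i₀
  have ht : 0 < t := (div_pos hi (hq i)).trans_le (hmax i (Finset.mem_univ i))
  have hwt : w ≤ t • q := fun j => (div_le_iff₀ (hq j)).1 (hmax j (Finset.mem_univ j))
  refine lt_irrefl (t * q i₀) ?_
  calc
    t * q i₀ = w i₀ := by rw [div_mul_cancel₀ _ (hq i₀).ne']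
    _ ≤ (A *ᵥ w) i₀ := hwA i₀
    _ ≤ (A *ᵥ (t • q)) i₀ := dotProduct_le_dotProduct_of_nonneg_left hwt (hA i₀)
    _ = t * (A *ᵥ q) i₀ := by rw [mulVec_smul, Pi.smul_apply, smul_eq_mul]
    _ < t * q i₀ := mul_lt_mul_of_pos_left (hAq i₀) ht

variable [DecidableEq ι]

theorem exists_pow_apply_pos_of_reflTransGen (hA : ∀ i j, 0 ≤ A i j) {i j : ι}
    (h : Relation.ReflTransGen (fun a b => 0 < A a b) i j) : ∃ k, 0 < (A ^ k) i j := by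
  induction h with
  | refl => exact ⟨0, by simp⟩
  | @tail b c _ hbc ih =>
    obtain ⟨k, hk⟩ := ih
    refine ⟨k + 1, ?_⟩
    rw [pow_succ, mul_apply]
    exact Finset.sum_pos' (fun m _ => mul_nonneg (pow_apply_nonneg hA k i m) (hA m c))
      ⟨b, Finset.mem_univ b, mul_pos hk hbc⟩

theorem exists_pow_mulVec_apply_pos_of_reflTransGen (hA : ∀ i j, 0 ≤ A i j) {c : ι → R}
    (hc : 0 ≤ c) {i j : ι} (hj : 0 < c j)
    (h : Relation.ReflTransGen (fun a b => 0 < A a b) i j) : ∃ k, 0 < (A ^ k *ᵥ c) i := by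
  obtain ⟨k, hk⟩ := exists_pow_apply_pos_of_reflTransGen hA h
  exact ⟨k, Finset.sum_pos' (fun m _ => mul_nonneg (pow_apply_nonneg hA k i m) (hc m))
    ⟨j, Finset.mem_univ j, mul_pos hk hj⟩⟩

theorem exists_pow_mulVec_lt_of_mulVec_add_eq (hA : ∀ i j, 0 ≤ A i j) {c q : ι → R}
    (hc : 0 ≤ c) (hpos : ∀ i, ∃ k, 0 < (A ^ k *ᵥ c) i) (hfix : A *ᵥ q + c = q) :
    ∃ K, ∀ i, (A ^ K *ᵥ q) i < q i := by
  choose k hk using hpos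
  refine ⟨Finset.univ.sup k + 1, fun i => ?_⟩
  have hsum : 0 < (∑ j ∈ Finset.range (Finset.univ.sup k + 1), A ^ j *ᵥ c) i := by
    rw [Finset.sum_apply]
    refine lt_of_lt_of_le (hk i) (Finset.single_le_sum (f := fun j => (A ^ j *ᵥ c) i)
      (fun j _ => dotProduct_nonneg_of_nonneg (pow_apply_nonneg hA j i) hc) ?_)
    exact Finset.mem_range_succ_iff.2 (Finset.le_sup (Finset.mem_univ i))
  have := congrFun (eq_pow_mulVec_add_sum_of_mulVec_add_eq hfix (Finset.univ.sup k + 1)) i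
  rw [Pi.add_apply] at this
  linarith

end OrderedField

variable {𝕜 : Type*} [RCLike 𝕜] {A : Matrix ι ι ℝ}

theorem norm_map_mulVec_apply_le (hA : ∀ i j, 0 ≤ A i j) (v : ι → 𝕜) (i : ι) :
    ‖(A.map (algebraMap ℝ 𝕜) *ᵥ v) i‖ ≤ (A *ᵥ fun j => ‖v j‖) i := by
  refine (norm_sum_le _ _).trans (le_of_eq (Finset.sum_congr rfl fun j _ => ?_))
  simp only [map_apply, norm_mul, RCLike.algebraMap_eq_ofReal, RCLike.norm_ofReal,
    abs_of_nonneg (hA i j)]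

variable [DecidableEq ι]

theorem norm_lt_one_of_mem_spectrum_of_pow_mulVec_lt (hA : ∀ i j, 0 ≤ A i j) {q : ι → ℝ}
    (hq : ∀ i, 0 < q i) {K : ℕ} (hK : ∀ i, (A ^ K *ᵥ q) i < q i) {z : 𝕜}
    (hz : z ∈ spectrum 𝕜 (A.map (algebraMap ℝ 𝕜))) : ‖z‖ < 1 := by
  rw [← spectrum_toLin', ← Module.End.hasEigenvalue_iff_mem_spectrum] at hz
  obtain ⟨v, hv⟩ := hz.exists_hasEigenvector
  by_contra! hz1
  have hAK := pow_apply_nonneg hA K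
  have hw : (fun i => ‖v i‖) ≤ A ^ K *ᵥ fun i => ‖v i‖ := fun i =>
    calc ‖v i‖ ≤ ‖z‖ ^ K * ‖v i‖ := le_mul_of_one_le_left (norm_nonneg _) (one_le_pow₀ hz1)
      _ = ‖((A ^ K).map (algebraMap ℝ 𝕜) *ᵥ v) i‖ := by
        rw [Matrix.map_pow, ← toLin'_apply, toLin'_pow, hv.pow_apply, Pi.smul_apply, norm_smul,
          norm_pow]
      _ ≤ _ := norm_map_mulVec_apply_le hAK v i
  have hv0 := eq_zero_of_le_mulVec_of_mulVec_lt hAK hq hK (fun i => norm_nonneg (v i)) hw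
  exact hv.2 (funext fun i => norm_eq_zero.1 (congrFun hv0 i))

end Matrix

theorem stmt14 {n : ℕ} (B : Matrix (Fin n) (Fin n) ℝ) (hB : ∀ i j, 0 ≤ B i j)
    (hirr : MatIrreducible B) (c : Fin n → ℝ) (hc : 0 ≤ c)
    (q : Fin n → ℝ) (hq : ∀ i, 0 < q i) (hfix : B *ᵥ q + c = q)
    (hleast : ∀ r : Fin n → ℝ, 0 ≤ r → B *ᵥ r + c = r → q ≤ r) :
    specRad B < 1 ∧ IsUnit (1 - B).det ∧ q = (1 - B)⁻¹ *ᵥ c ∧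
      ∀ x : Fin n → ℝ, B *ᵥ x + c = x → x = q := by
  have hreach (i : Fin n) : ∃ k, 0 < (B ^ k *ᵥ c) i := by
    obtain ⟨j, hj⟩ : ∃ j, 0 < c j := by
      by_contra! h
      have hc0 : c = 0 := le_antisymm h hc
      exact (hq i).not_ge (hleast 0 le_rfl (by simp [hc0]) i)
    exact exists_pow_mulVec_apply_pos_of_reflTransGen hB hc hj (hirr i j)
  obtain ⟨K, hK⟩ := exists_pow_mulVec_lt_of_mulVec_add_eq hB hc hreach hfix
  have hdet : IsUnit (1 - B).det := by
    have h1 : (1 : ℝ) ∉ spectrum ℝ (B.map (algebraMap ℝ ℝ)) := fun h =>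
      (norm_lt_one_of_mem_spectrum_of_pow_mulVec_lt hB hq hK h).ne norm_one
    simpa [spectrum.mem_iff, isUnit_iff_isUnit_det] using h1
  have hq_eq := eq_inv_one_sub_mulVec_of_mulVec_add_eq hdet hfix
  refine ⟨spectrum.spectralRadius_lt_of_forall_lt_of_finite (finite_spectrum _) one_pos
    fun z hz => ?_, hdet, hq_eq,
    fun x hx => (eq_inv_one_sub_mulVec_of_mulVec_add_eq hdet hx).trans hq_eq.symm⟩
  exact_mod_cast norm_lt_one_of_mem_spectrum_of_pow_mulVec_lt hB hq hK hz
end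

section
/- Let x = P(x) be a quadratic MPS with least fixed point q* > 0 and Jacobian B(x), and suppose 0 ≤ z ≤ q*, ρ(B(z)) < 1. Then N_P(z) = z + (I − B(z))^{−1}(P(z) − z) is well-defined, and q* ≥ N_P(z) componentwise; moreover (I − B(z))^{−1} = Σ_{i=0}^∞ B(z)^i is entrywise nonnegative. -/
open Matrix MvPolynomial

/-- The Jacobian matrix B(x)_{ij} = ∂P_i/∂x_j evaluated at x. -/
noncomputable def jacob {n : ℕ} (P : Fin n → MvPolynomial (Fin n) ℝ) (x : Fin n → ℝ) :
    Matrix (Fin n) (Fin n) ℝ :=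
  Matrix.of fun i j => MvPolynomial.eval x (MvPolynomial.pderiv j (P i))

/-- The Newton operator N_P(z) = z + (I - B(z))⁻¹ (P(z) - z). -/
noncomputable def newtonOp {n : ℕ} (P : Fin n → MvPolynomial (Fin n) ℝ) (z : Fin n → ℝ) :
    Fin n → ℝ := z + (1 - jacob P z)⁻¹ *ᵥ (evalVec P z - z)

/-!
Everything rests on the exact Taylor identity for quadratic polynomials,
`2 (P(q) - P(z)) = (B(z) + B(q)) (q - z)`. Nonnegative coefficients make `B` monotone on the
nonnegative orthant, so the residual `P(q) - P(z) - B(z) (q - z) = (B(q) - B(z)) (q - z) / 2` is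
nonnegative, and for a fixed point `q` it equals `(I - B(z)) (q - N_P(z))`. Since `ρ(B(z)) < 1`,
Gelfand's formula makes the Neumann series `∑ B(z)ⁱ` converge to `(I - B(z))⁻¹`, which is
therefore entrywise nonnegative and preserves the sign of the residual.
-/

theorem Finsupp.eq_zero_or_single_or_add_single_of_sum_le_two {σ : Type*} (m : σ →₀ ℕ)
    (h : (m.sum fun _ e => e) ≤ 2) :
    m = 0 ∨ (∃ i, m = single i 1) ∨ ∃ i j, m = single i 1 + single j 1 := by
  classical
  have hcard : Multiset.card (toMultiset m) ≤ 2 := by rwa [card_toMultiset]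
  interval_cases hc : Multiset.card (toMultiset m)
  · exact Or.inl (by simpa using toMultiset_eq_iff.mp (Multiset.card_eq_zero.mp hc))
  · obtain ⟨i, hi⟩ := Multiset.card_eq_one.mp hc
    exact Or.inr (Or.inl ⟨i, by simpa using toMultiset_eq_iff.mp hi⟩)
  · obtain ⟨i, j, hij⟩ := Multiset.card_eq_two.mp hc
    refine Or.inr (Or.inr ⟨i, j, ?_⟩)
    simpa [← Multiset.singleton_add, Multiset.toFinsupp_add] using toMultiset_eq_iff.mp hij

namespace MvPolynomial

section Quadratic

variable {R σ : Type*} [CommRing R] [Fintype σ]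

theorem two_mul_eval_sub_eval_monomial (x y : σ → R) {m : σ →₀ ℕ}
    (hm : (m.sum fun _ e => e) ≤ 2) (c : R) :
    2 * (eval y (monomial m c) - eval x (monomial m c)) =
      ∑ k, (eval x (pderiv k (monomial m c)) + eval y (pderiv k (monomial m c))) *
        (y k - x k) := by
  classical
  rcases m.eq_zero_or_single_or_add_single_of_sum_le_two hm with rfl | ⟨i, rfl⟩ | ⟨i, j, rfl⟩
  · simp
  all_goals
    simp only [monomial_single_add, pow_one, ← C_mul_X_eq_monomial]
    simp [Pi.single_apply, apply_ite (eval x), apply_ite (eval y), ite_mul, add_mul,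
      Finset.sum_add_distrib]
    ring

theorem two_mul_eval_sub_eval_of_totalDegree_le_two (x y : σ → R) {p : MvPolynomial σ R}
    (hp : p.totalDegree ≤ 2) :
    2 * (eval y p - eval x p) =
      ∑ k, (eval x (pderiv k p) + eval y (pderiv k p)) * (y k - x k) := by
  rw [p.as_sum]
  simp only [map_sum, ← Finset.sum_sub_distrib, Finset.mul_sum, ← Finset.sum_add_distrib,
    Finset.sum_mul]
  rw [Finset.sum_comm]
  exact Finset.sum_congr rfl fun m hm =>
    two_mul_eval_sub_eval_monomial x y ((le_totalDegree hm).trans hp) _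

end Quadratic

section Nonneg

variable {R σ : Type*} [CommSemiring R] [PartialOrder R] [IsOrderedRing R]

theorem eval_nonneg_of_coeff_nonneg_s18 {p : MvPolynomial σ R} (hp : ∀ m, 0 ≤ coeff m p)
    {x : σ → R} (hx : 0 ≤ x) : 0 ≤ eval x p := by
  rw [eval_eq]
  exact Finset.sum_nonneg fun m _ =>
    mul_nonneg (hp m) (Finset.prod_nonneg fun i _ => pow_nonneg (hx i) _)

theorem eval_le_eval_of_coeff_nonneg_s18 {p : MvPolynomial σ R} (hp : ∀ m, 0 ≤ coeff m p)
    {x y : σ → R} (hx : 0 ≤ x) (hxy : x ≤ y) : eval x p ≤ eval y p := by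
  rw [eval_eq, eval_eq]
  exact Finset.sum_le_sum fun m _ => mul_le_mul_of_nonneg_left
    (Finset.prod_le_prod (fun i _ => pow_nonneg (hx i) _)
      fun i _ => pow_le_pow_left₀ (hx i) (hxy i) _) (hp m)

theorem coeff_pderiv_nonneg {p : MvPolynomial σ R} (hp : ∀ m, 0 ≤ coeff m p) (i : σ)
    (m : σ →₀ ℕ) : 0 ≤ coeff m (pderiv i p) := by
  rw [coeff_pderiv]
  exact mul_nonneg (hp _) (add_nonneg (Nat.cast_nonneg _) zero_le_one)

end Nonneg

end MvPolynomial

theorem spectrum.summable_pow_of_spectralRadius_lt_one {A : Type*} [NormedRing A]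
    [NormedAlgebra ℂ A] [CompleteSpace A] {a : A} (h : spectralRadius ℂ a < 1) :
    Summable (a ^ ·) := by
  obtain ⟨r, hρr, hr1⟩ := ENNReal.lt_iff_exists_nnreal_btwn.mp h
  refine .of_norm_bounded_eventually_nat
    (summable_geometric_of_lt_one r.coe_nonneg (by exact_mod_cast hr1)) ?_
  filter_upwards [(pow_norm_pow_one_div_tendsto_nhds_spectralRadius a).eventually_lt_const hρr,
    Filter.eventually_ne_atTop 0] with m hm hm0
  have hroot : ‖a ^ m‖ ^ (1 / m : ℝ) ≤ r := by
    rw [ENNReal.ofReal_lt_iff_lt_toReal (by positivity) ENNReal.coe_ne_top] at hm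
    exact hm.le
  calc ‖a ^ m‖ = (‖a ^ m‖ ^ (1 / m : ℝ)) ^ m := by
        rw [one_div, Real.rpow_inv_natCast_pow (norm_nonneg _) hm0]
    _ ≤ (r : ℝ) ^ m := by gcongr

namespace Matrix

theorem summable_pow_of_specRad_lt_one {n : ℕ} {A : Matrix (Fin n) (Fin n) ℝ}
    (h : specRad A < 1) : Summable (A ^ ·) := by
  -- Any Banach algebra norm on complex matrices will do; the real powers are the real parts of
  -- the complexified ones.
  let _ : NormedRing (Matrix (Fin n) (Fin n) ℂ) := Matrix.linftyOpNormedRing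
  let _ : NormedAlgebra ℂ (Matrix (Fin n) (Fin n) ℂ) := Matrix.linftyOpNormedAlgebra
  have _ : CompleteSpace (Matrix (Fin n) (Fin n) ℂ) := FiniteDimensional.complete ℂ _
  have hc := (spectrum.summable_pow_of_spectralRadius_lt_one (a := A.map (algebraMap ℝ ℂ)) h).map
    (Complex.reAddGroupHom.mapMatrix) (continuous_id.matrix_map Complex.continuous_re)
  convert hc using 2 with m
  rw [Function.comp_apply, ← Matrix.map_pow]
  ext i j
  simp

section Nonneg

variable {ι α : Type*} [Fintype ι] [Semiring α] [PartialOrder α] [IsOrderedRing α]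

theorem mulVec_nonneg {κ : Type*} {A : Matrix κ ι α} (hA : ∀ i j, 0 ≤ A i j) {v : ι → α}
    (hv : 0 ≤ v) : 0 ≤ A *ᵥ v :=
  fun i => Finset.sum_nonneg fun j _ => mul_nonneg (hA i j) (hv j)

variable [DecidableEq ι] {A : Matrix ι ι α}

theorem tsum_pow_apply_nonneg [TopologicalSpace α] [OrderClosedTopology α]
    (hA : ∀ i j, 0 ≤ A i j) (hs : Summable (A ^ ·)) (i j : ι) : 0 ≤ (∑' m, A ^ m) i j :=
  (Pi.hasSum.mp (Pi.hasSum.mp hs.hasSum i) j).nonneg fun m => pow_apply_nonneg hA m i j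

end Nonneg

end Matrix

section PolynomialSystem

variable {n : ℕ} {P : Fin n → MvPolynomial (Fin n) ℝ}

theorem jacob_nonneg (hpos : ∀ i m, 0 ≤ (P i).coeff m) {x : Fin n → ℝ} (hx : 0 ≤ x)
    (i j : Fin n) : 0 ≤ jacob P x i j :=
  eval_nonneg_of_coeff_nonneg_s18 (coeff_pderiv_nonneg (hpos i) j) hx

theorem jacob_mulVec_le_evalVec_sub (hdeg : ∀ i, (P i).totalDegree ≤ 2)
    (hpos : ∀ i m, 0 ≤ (P i).coeff m) {x y : Fin n → ℝ} (hx : 0 ≤ x) (hxy : x ≤ y) :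
    jacob P x *ᵥ (y - x) ≤ evalVec P y - evalVec P x := by
  intro i
  have htaylor := two_mul_eval_sub_eval_of_totalDegree_le_two x y (hdeg i)
  have hmono : ∑ k, 2 * eval x (pderiv k (P i)) * (y k - x k) ≤
      ∑ k, (eval x (pderiv k (P i)) + eval y (pderiv k (P i))) * (y k - x k) := by
    gcongr with k
    · exact sub_nonneg.mpr (hxy k)
    · linarith [eval_le_eval_of_coeff_nonneg_s18 (coeff_pderiv_nonneg (hpos i) k) hx hxy]
  simp only [mulVec, dotProduct, jacob, of_apply, Pi.sub_apply, evalVec]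
  simp only [mul_assoc, ← Finset.mul_sum] at hmono
  linarith

theorem sub_newtonOp_eq {q z : Fin n → ℝ} (hfix : evalVec P q = q)
    (hdet : IsUnit (1 - jacob P z).det) :
    q - newtonOp P z =
      (1 - jacob P z)⁻¹ *ᵥ (evalVec P q - evalVec P z - jacob P z *ᵥ (q - z)) := by
  calc q - newtonOp P z = (q - z) - (1 - jacob P z)⁻¹ *ᵥ (evalVec P z - z) := by
        rw [newtonOp]; abel
    _ = (1 - jacob P z)⁻¹ *ᵥ ((1 - jacob P z) *ᵥ (q - z) - (evalVec P z - z)) := by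
        rw [mulVec_sub _ ((1 - jacob P z) *ᵥ (q - z)), mulVec_mulVec, nonsing_inv_mul _ hdet,
          one_mulVec]
    _ = _ := by
        rw [hfix, sub_mulVec, one_mulVec]
        congr 1
        abel

end PolynomialSystem

theorem stmt18_general {n : ℕ} (P : Fin n → MvPolynomial (Fin n) ℝ)
    (hdeg : ∀ i, (P i).totalDegree ≤ 2) (hpos : ∀ i m, 0 ≤ (P i).coeff m)
    (q : Fin n → ℝ) (hfix : evalVec P q = q)
    (z : Fin n → ℝ) (hz0 : 0 ≤ z) (hzq : z ≤ q)
    (hrad : specRad (jacob P z) < 1) :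
    IsUnit (1 - jacob P z).det ∧
    newtonOp P z ≤ q ∧
    Summable (fun i : ℕ => jacob P z ^ i) ∧
    (∑' i : ℕ, jacob P z ^ i) = (1 - jacob P z)⁻¹ ∧
    (∀ i j, 0 ≤ (1 - jacob P z)⁻¹ i j) := by
  have hsum := Matrix.summable_pow_of_specRad_lt_one hrad
  have hright := hsum.one_sub_mul_tsum_pow
  have hdet := Matrix.isUnit_det_of_right_inverse hright
  have hinv := Matrix.inv_eq_right_inv hright
  have hinv_nonneg : ∀ i j, 0 ≤ (1 - jacob P z)⁻¹ i j := by
    rw [hinv]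
    exact Matrix.tsum_pow_apply_nonneg (jacob_nonneg hpos hz0) hsum
  have hnewton : 0 ≤ q - newtonOp P z := by
    rw [sub_newtonOp_eq hfix hdet]
    exact Matrix.mulVec_nonneg hinv_nonneg
      (sub_nonneg.mpr (jacob_mulVec_le_evalVec_sub hdeg hpos hz0 hzq))
  exact ⟨hdet, sub_nonneg.mp hnewton, hsum, hinv.symm, hinv_nonneg⟩

theorem stmt18 {n : ℕ} (P : Fin n → MvPolynomial (Fin n) ℝ)
    (hdeg : ∀ i, (P i).totalDegree ≤ 2) (hpos : ∀ i m, 0 ≤ (P i).coeff m)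
    (q : Fin n → ℝ) (hq : ∀ i, 0 < q i) (hfix : evalVec P q = q)
    (hleast : ∀ r : Fin n → ℝ, 0 ≤ r → evalVec P r = r → q ≤ r)
    (z : Fin n → ℝ) (hz0 : 0 ≤ z) (hzq : z ≤ q)
    (hrad : specRad (jacob P z) < 1) :
    IsUnit (1 - jacob P z).det ∧
    newtonOp P z ≤ q ∧
    Summable (fun i : ℕ => jacob P z ^ i) ∧
    (∑' i : ℕ, jacob P z ^ i) = (1 - jacob P z)⁻¹ ∧
    (∀ i j, 0 ≤ (1 - jacob P z)⁻¹ i j) :=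
  stmt18_general P hdeg hpos q hfix z hz0 hzq hrad
end
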